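/- arXiv:1811.10566 — 2 statements merged into one kernel-verified Lean document; each statement's English description precedes it below -/
import Mathlib

section
/- If f is a polynomial of degree at most 2, then the second-order divided differences satisfy D_j = D_{j+1}, and consequently both the weighted arithmetic mean M_j and the weighted harmonic mean V_j equal this common value D, so that the PPH polynomial coincides with the Lagrange polynomial; in particular, the PPH reconstruction reproduces polynomials of degree 2. -/
/-! A polynomial of degree at most two is `c₀ + c₁ x + c₂ x²`, and its second divided difference
over any three distinct nodes is `c₂`. Hence `D_j = D_{j+1}`, and every mean of two equal numbers
returns that number. -/

open Polynomial

def secondDivDiff {K : Type*} [Field K] (f : K → K) (a b c : K) : K :=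
  ((f c - f b) / (c - b) - (f b - f a) / (b - a)) / (c - a)

theorem eval_eq_of_natDegree_le_two {K : Type*} [Field K] {p : K[X]} (hp : p.natDegree ≤ 2)
    (x : K) : p.eval x = p.coeff 0 + p.coeff 1 * x + p.coeff 2 * x ^ 2 := by
  rw [eval_eq_sum_range' (Nat.lt_succ_of_le hp)]
  simp only [Finset.sum_range_succ, Finset.sum_range_zero]
  ring

theorem secondDivDiff_eval_eq_coeff_two {K : Type*} [Field K] {p : K[X]} (hp : p.natDegree ≤ 2)
    {a b c : K} (hab : a ≠ b) (hbc : b ≠ c) (hac : a ≠ c) :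
    secondDivDiff p.eval a b c = p.coeff 2 := by
  have hba : b - a ≠ 0 := sub_ne_zero.mpr hab.symm
  have hcb : c - b ≠ 0 := sub_ne_zero.mpr hbc.symm
  have hca : c - a ≠ 0 := sub_ne_zero.mpr hac.symm
  simp only [secondDivDiff, eval_eq_of_natDegree_le_two hp]
  field_simp
  ring

theorem weighted_mean_self {K : Type*} [Field K] {w w' : K} (hw : w + w' = 1) (D : K) :
    w * D + w' * D = D := by
  linear_combination D * hw

theorem weighted_harmonic_mean_self {K : Type*} [Field K] {w w' : K} (hw : w + w' = 1)
    {D : K} (hD : D ≠ 0) : D * D / (w * D + w' * D) = D := by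
  rw [weighted_mean_self hw, mul_div_cancel_right₀ D hD]

theorem pph_reproduces_degree_two_general (p : Polynomial ℝ) (hp : p.natDegree ≤ 2)
    (x0 x1 x2 x3 : ℝ) (h01 : x0 < x1) (h12 : x1 < x2) (h23 : x2 < x3)
    (wj wj1 : ℝ) (hsum : wj + wj1 = 1)
    (Dj Dj1 : ℝ)
    (hDj : Dj = ((p.eval x2 - p.eval x1) / (x2 - x1) - (p.eval x1 - p.eval x0) / (x1 - x0)) / (x2 - x0))
    (hDj1 : Dj1 = ((p.eval x3 - p.eval x2) / (x3 - x2) - (p.eval x2 - p.eval x1) / (x2 - x1)) / (x3 - x1)) :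
    Dj = Dj1 ∧ wj * Dj + wj1 * Dj1 = Dj ∧
      (Dj * Dj1 > 0 → Dj * Dj1 / (wj * Dj1 + wj1 * Dj) = Dj) := by
  have hDj_eq : Dj = p.coeff 2 :=
    hDj.trans (secondDivDiff_eval_eq_coeff_two hp h01.ne h12.ne (h01.trans h12).ne)
  have hDj1_eq : Dj1 = p.coeff 2 :=
    hDj1.trans (secondDivDiff_eval_eq_coeff_two hp h12.ne h23.ne (h12.trans h23).ne)
  have hD : Dj = Dj1 := hDj_eq.trans hDj1_eq.symm
  subst hD
  refine ⟨rfl, weighted_mean_self hsum Dj, fun hpos => ?_⟩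
  exact weighted_harmonic_mean_self hsum (mul_self_pos.mp hpos)

/-- PPH reproduces polynomials of degree ≤ 2: the two second-order divided
differences coincide, hence the weighted arithmetic mean `Mj` and the weighted
harmonic mean `Vj` both equal this common value, so the PPH polynomial coincides
with the Lagrange polynomial (their coefficients differ only through `Mj` vs `Vj`). -/
theorem pph_reproduces_degree_two (p : Polynomial ℝ) (hp : p.natDegree ≤ 2)
    (x0 x1 x2 x3 : ℝ) (h01 : x0 < x1) (h12 : x1 < x2) (h23 : x2 < x3)
    (wj wj1 : ℝ) (hwj : 0 < wj) (hwj1 : 0 < wj1) (hsum : wj + wj1 = 1)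
    (Dj Dj1 : ℝ)
    (hDj : Dj = ((p.eval x2 - p.eval x1) / (x2 - x1) - (p.eval x1 - p.eval x0) / (x1 - x0)) / (x2 - x0))
    (hDj1 : Dj1 = ((p.eval x3 - p.eval x2) / (x3 - x2) - (p.eval x2 - p.eval x1) / (x2 - x1)) / (x3 - x1)) :
    Dj = Dj1 ∧ wj * Dj + wj1 * Dj1 = Dj ∧
      (Dj * Dj1 > 0 → Dj * Dj1 / (wj * Dj1 + wj1 * Dj) = Dj) :=
  pph_reproduces_degree_two_general p hp x0 x1 x2 x3 h01 h12 h23 wj wj1 hsum Dj Dj1 hDj hDj1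
end

section
/- Let T = −D_j + ε with ε > 0, in the case D_j ≤ 0 < D_{j+1}. Define J = V(D_j + T, D_{j+1} + T) − T where V is the weighted harmonic mean with weights w_j, w_{j+1} > 0, w_j + w_{j+1} = 1. Then |J| ≤ max(|D_j|, |D_j| + (w_{j+1}/w_j)·ε), and in particular |J| ≤ |D_j| + (w_{j+1}/w_j)·ε. -/
/-! With `x = Dj + T = ε` and `y = Dj1 + T ≥ ε`, the weighted harmonic mean `V(x, y)` lies in
`[x, x / wj)`, and `x / wj = ε + (wj1 / wj) ε`. Subtracting `T` gives
`Dj ≤ J ≤ Dj + (wj1 / wj) ε`, which bounds `|J|`. -/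

noncomputable def weightedHarmonicMean (a b x y : ℝ) : ℝ := x * y / (a * y + b * x)

section WeightedHarmonicMean

variable {a b x y : ℝ}

lemma le_weightedHarmonicMean (ha : 0 < a) (hb : 0 < b) (hab : a + b = 1) (hx : 0 < x)
    (hxy : x ≤ y) : x ≤ weightedHarmonicMean a b x y := by
  have hden : 0 < a * y + b * x := by nlinarith
  rw [weightedHarmonicMean, le_div_iff₀ hden]
  obtain rfl : a = 1 - b := by linarith
  nlinarith [mul_le_mul_of_nonneg_left hxy (mul_pos hb hx).le]

lemma weightedHarmonicMean_lt_div (ha : 0 < a) (hb : 0 < b) (hx : 0 < x) (hy : 0 < y) :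
    weightedHarmonicMean a b x y < x / a := by
  have hden : 0 < a * y + b * x := by positivity
  rw [weightedHarmonicMean, div_lt_div_iff₀ hden ha]
  nlinarith [mul_pos hb (mul_pos hx hx)]

end WeightedHarmonicMean

lemma div_eq_add_div_mul_of_add_eq_one {a b : ℝ} (ha : a ≠ 0) (hab : a + b = 1) (x : ℝ) :
    x / a = x + b / a * x := by
  field_simp
  linear_combination -x * hab

lemma abs_le_abs_add_of_le_of_le {a c J : ℝ} (hc : 0 ≤ c) (hlo : a ≤ J) (hhi : J ≤ a + c) :
    |J| ≤ |a| + c :=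
  abs_le.mpr ⟨by linarith [neg_abs_le a], by linarith [le_abs_self a]⟩

/-- Case A of the translated harmonic mean: `Dj ≤ 0 < Dj1`, `T = -Dj + ε`. -/
theorem translated_mean_bound_caseA (Dj Dj1 wj wj1 ε T J : ℝ)
    (hwj : 0 < wj) (hwj1 : 0 < wj1) (hsum : wj + wj1 = 1)
    (hε : 0 < ε) (hDj : Dj ≤ 0) (hDj1 : 0 < Dj1)
    (hT : T = -Dj + ε)
    (hJ : J = (Dj + T) * (Dj1 + T) / (wj * (Dj1 + T) + wj1 * (Dj + T)) - T) :
    |J| ≤ max |Dj| (|Dj| + (wj1 / wj) * ε) ∧ |J| ≤ |Dj| + (wj1 / wj) * ε := by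
  have hx : Dj + T = ε := by rw [hT]; ring
  have hxy : ε ≤ Dj1 + T := by rw [hT]; linarith
  have hJV : J = weightedHarmonicMean wj wj1 ε (Dj1 + T) - T := by
    rw [hJ, hx, weightedHarmonicMean]
  have hlo : Dj ≤ J := by
    linarith [le_weightedHarmonicMean hwj hwj1 hsum hε hxy]
  have hhi : J ≤ Dj + wj1 / wj * ε := by
    have := weightedHarmonicMean_lt_div hwj hwj1 hε (hε.trans_le hxy)
    rw [div_eq_add_div_mul_of_add_eq_one hwj.ne' hsum] at this
    linarith
  have hbound := abs_le_abs_add_of_le_of_le (by positivity) hlo hhi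
  exact ⟨le_max_of_le_right hbound, hbound⟩
end
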